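/- arXiv:1403.2166 — 5 statements merged into one kernel-verified Lean document; each statement's English description precedes it below -/
import Mathlib

section
/- If (v, A) forms a set-gauge, then (v, B) also forms a set-gauge, where B := {a + rv : a ∈ A, r ≥ 0}; that is, 0 ∈ B, B + b ⊆ B for every b ∈ B, and −v does not belong to the convex hull of B. -/
/-- `(v, A)` forms a set-gauge: `v` is a unit vector, `A` contains the origin,
`A + a ⊆ A` for every `a ∈ A`, and `-v` is not in the convex hull of `A`. -/
def IsSetGauge {d : ℕ} (v : EuclideanSpace ℝ (Fin d))
    (A : Set (EuclideanSpace ℝ (Fin d))) : Prop :=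
  ‖v‖ = 1 ∧ (0 : EuclideanSpace ℝ (Fin d)) ∈ A ∧
    (∀ a ∈ A, (fun x => x + a) '' A ⊆ A) ∧ -v ∉ convexHull ℝ A

open Pointwise in
theorem stmt4 (d : ℕ) (hd : 0 < d) (v : EuclideanSpace ℝ (Fin d))
    (A : Set (EuclideanSpace ℝ (Fin d))) (hA : IsSetGauge v A) :
    IsSetGauge v {x : EuclideanSpace ℝ (Fin d) | ∃ a ∈ A, ∃ r : ℝ, 0 ≤ r ∧ x = a + r • v} := by
  obtain ⟨hv, h0, hadd, hconv⟩ := hA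
  refine ⟨hv, ⟨0, h0, 0, le_refl 0, by simp⟩, ?_, ?_⟩
  · rintro x ⟨a, ha, r, hr, rfl⟩ y ⟨z, ⟨b, hb, s, hs, rfl⟩, rfl⟩
    exact ⟨b + a, hadd a ha ⟨b, hb, rfl⟩, s + r, by positivity, by module⟩
  · intro hmem
    set C : Set (EuclideanSpace ℝ (Fin d)) := {x | ∃ r : ℝ, 0 ≤ r ∧ x = r • v} with hC
    have hCconv : Convex ℝ C := by
      rintro x ⟨r, hr, rfl⟩ y ⟨s, hs, rfl⟩ p q hp hq hpq
      exact ⟨p*r + q*s, by positivity, by module⟩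
    have hS : Convex ℝ (convexHull ℝ A + C) := (convex_convexHull ℝ A).add hCconv
    have hsub : {x : EuclideanSpace ℝ (Fin d) | ∃ a ∈ A, ∃ r : ℝ, 0 ≤ r ∧ x = a + r • v}
        ⊆ convexHull ℝ A + C := by
      rintro x ⟨a, ha, r, hr, rfl⟩
      exact Set.add_mem_add (subset_convexHull ℝ A ha) ⟨r, hr, rfl⟩
    have hmem' := convexHull_min hsub hS hmem
    rw [Set.mem_add] at hmem'
    obtain ⟨y, hy, z, ⟨r, hr, rfl⟩, hzy⟩ := hmem'
    have h1r : (0:ℝ) < 1 + r := by linarith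
    have hy' : y = -((1+r) • v) := by
      have : y = -v - r • v := by rw [← hzy]; module
      rw [this]; module
    apply hconv
    have h0' : (0:EuclideanSpace ℝ (Fin d)) ∈ convexHull ℝ A := subset_convexHull ℝ A h0
    have hc := (convex_convexHull ℝ A) hy h0'
      (by positivity : (0:ℝ) ≤ 1/(1+r)) (by positivity : (0:ℝ) ≤ r/(1+r))
      (by field_simp)
    have heq : (1/(1+r)) • y + (r/(1+r)) • (0:EuclideanSpace ℝ (Fin d)) = -v := by
      rw [hy', smul_zero, add_zero, smul_neg, smul_smul]
      have : (1/(1+r)) * (1+r) = 1 := by field_simp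
      rw [this, one_smul]
    rwa [heq] at hc
end

section
/- Let A ⊆ ℝ^d satisfy 0 ∈ A and A + a ⊆ A for every a ∈ A, and let v ∈ ℝ^d be such that −v does not belong to the closure of the convex hull of A. Then there exists a unit vector w ∈ ℝ^d such that ⟨v, w⟩ > 0 and ⟨a, w⟩ ≥ 0 for every a ∈ A. -/
open scoped InnerProductSpace

theorem stmt6 (d : ℕ) (hd : 0 < d) (A : Set (EuclideanSpace ℝ (Fin d)))
    (h0A : (0 : EuclideanSpace ℝ (Fin d)) ∈ A)
    (hadd : ∀ a ∈ A, (fun x => x + a) '' A ⊆ A)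
    (v : EuclideanSpace ℝ (Fin d)) (hv : -v ∉ closure (convexHull ℝ A)) :
    ∃ w : EuclideanSpace ℝ (Fin d), ‖w‖ = 1 ∧ 0 < ⟪v, w⟫_ℝ ∧ ∀ a ∈ A, 0 ≤ ⟪a, w⟫_ℝ := by
  obtain ⟨f, u, hfC, hfv⟩ := geometric_hahn_banach_closed_point
    ((convex_convexHull ℝ A).closure) isClosed_closure hv
  have hAC : ∀ a ∈ A, a ∈ closure (convexHull ℝ A) := fun a ha =>
    subset_closure (subset_convexHull ℝ A ha)
  have hu : 0 < u := by
    have := hfC 0 (hAC 0 h0A)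
    simpa using this
  -- iterated sums stay in A
  have hmul : ∀ a ∈ A, ∀ n : ℕ, (n + 1) • a ∈ A := by
    intro a ha n
    induction n with
    | zero => simpa using ha
    | succ k ih =>
      have := hadd a ha (Set.mem_image_of_mem _ ih)
      simpa [succ_nsmul] using this
  have hfa : ∀ a ∈ A, f a ≤ 0 := by
    intro a ha
    by_contra h
    push_neg at h
    obtain ⟨n, hn⟩ := exists_nat_gt (u / f a)
    have h1 : f ((n + 1) • a) < u := hfC _ (hAC _ (hmul a ha n))
    have h2 : f ((n + 1) • a) = (n + 1) * f a := by
      rw [map_nsmul]; push_cast [nsmul_eq_mul]; ring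
    have h3 : u < n * f a := by
      rwa [div_lt_iff₀ h] at hn
    have h4 : (n : ℝ) * f a ≤ (n + 1) * f a := by nlinarith
    linarith [h2 ▸ h1]
  have hfv' : f v < 0 := by
    have : f (-v) = -f v := map_neg f v
    linarith [hfv, this ▸ hfv, hu]
  set z := -((InnerProductSpace.toDual ℝ (EuclideanSpace ℝ (Fin d))).symm f) with hz
  have hzinner : ∀ x, ⟪z, x⟫_ℝ = -f x := by
    intro x
    rw [hz, inner_neg_left, InnerProductSpace.toDual_symm_apply]
  have hzv : 0 < ⟪z, v⟫_ℝ := by rw [hzinner]; linarith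
  have hzne : z ≠ 0 := by
    intro h
    rw [h, inner_zero_left] at hzv
    exact lt_irrefl 0 hzv
  refine ⟨‖z‖⁻¹ • z, norm_smul_inv_norm hzne, ?_, ?_⟩
  · rw [real_inner_smul_right, real_inner_comm]
    exact mul_pos (inv_pos.2 (norm_pos_iff.2 hzne)) hzv
  · intro a ha
    rw [real_inner_smul_right, real_inner_comm, hzinner]
    have h1 := hfa a ha
    have h2 : (0:ℝ) ≤ ‖z‖⁻¹ := by positivity
    nlinarith
end

section
/- Let (v, A) form a set-gauge and assume moreover that −v does not belong to the closure of the convex hull of A. Then for every nonempty bounded set F ⊆ ℝ^d, the set {r ∈ [0,∞) : (A + rv) ∩ F ≠ ∅} is bounded above; in particular, there exists r ≥ 0 with (A + rv) ∩ F = ∅. -/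
theorem stmt8 (d : ℕ) (hd : 0 < d) (v : EuclideanSpace ℝ (Fin d))
    (A : Set (EuclideanSpace ℝ (Fin d))) (hA : IsSetGauge v A)
    (hcl : -v ∉ closure (convexHull ℝ A))
    (F : Set (EuclideanSpace ℝ (Fin d))) (hFne : F.Nonempty)
    (hFbdd : Bornology.IsBounded F) :
    BddAbove {r : ℝ | 0 ≤ r ∧ ((fun a => a + r • v) '' A ∩ F).Nonempty} ∧
    ∃ r : ℝ, 0 ≤ r ∧ (fun a => a + r • v) '' A ∩ F = ∅ := by
  obtain ⟨hv, h0, -, -⟩ := hA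
  have hCconv : Convex ℝ (closure (convexHull ℝ A)) := (convex_convexHull ℝ A).closure
  obtain ⟨f, u, hfu, hub⟩ :=
    geometric_hahn_banach_point_closed hCconv isClosed_closure hcl
  have h0C : (0 : EuclideanSpace ℝ (Fin d)) ∈ closure (convexHull ℝ A) :=
    subset_closure (subset_convexHull ℝ A h0)
  have hu0 : u < 0 := by have := hub 0 h0C; simpa using this
  have hfv : 0 < f v := by
    have h1 : f (-v) < u := hfu
    rw [map_neg] at h1; linarith
  obtain ⟨R, hR⟩ := hFbdd.subset_closedBall 0
  have hfF : ∀ x ∈ F, f x ≤ ‖f‖ * R := by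
    intro x hx
    calc f x ≤ ‖f x‖ := le_abs_self _
    _ ≤ ‖f‖ * ‖x‖ := f.le_opNorm x
    _ ≤ ‖f‖ * R := by
        have := hR hx
        rw [Metric.mem_closedBall, dist_zero_right] at this
        exact mul_le_mul_of_nonneg_left this (norm_nonneg f)
  have hfA : ∀ a ∈ A, u < f a := fun a ha =>
    hub a (subset_closure (subset_convexHull ℝ A ha))
  set B : ℝ := max 0 ((‖f‖ * R - u) / f v) with hB
  have key : ∀ r : ℝ, 0 ≤ r → ((fun a => a + r • v) '' A ∩ F).Nonempty → r ≤ B := by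
    intro r hr ⟨x, ⟨⟨a, ha, hax⟩, hxF⟩⟩
    have h1 : f a + r * f v ≤ ‖f‖ * R := by
      have := hfF x hxF
      rw [← hax] at this
      simpa [map_add, map_smul, smul_eq_mul] using this
    have h2 : u < f a := hfA a ha
    have h3 : r * f v ≤ ‖f‖ * R - u := by linarith
    have h4 : r ≤ (‖f‖ * R - u) / f v := (le_div_iff₀ hfv).mpr h3
    exact le_trans h4 (le_max_right _ _)
  constructor
  · exact ⟨B, fun r hr => key r hr.1 hr.2⟩
  · refine ⟨B + 1, by positivity, ?_⟩
    by_contra h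
    have hne : ((fun a => a + (B + 1) • v) '' A ∩ F).Nonempty :=
      Set.nonempty_iff_ne_empty.mpr h
    have := key (B + 1) (by positivity) hne
    linarith
end

section
/- A set C ⊆ ℝ^d is said to be similar to a closed convex cone K ⊆ ℝ^d if there exist vectors v₋, v₊ ∈ ℝ^d such that K + v₋ ⊆ C ⊆ K + v₊. If C ⊆ ℝ^d is similar to the closed convex cones K₁ and K₂, then K₁ = K₂. -/
/-- `C` is similar to the closed convex cone `K` if `K + v₋ ⊆ C ⊆ K + v₊`
for some vectors `v₋, v₊`. -/
def SimilarToCone {d : ℕ} (C K : Set (EuclideanSpace ℝ (Fin d))) : Prop :=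
  ∃ vm vp : EuclideanSpace ℝ (Fin d),
    (fun x => x + vm) '' K ⊆ C ∧ C ⊆ (fun x => x + vp) '' K

lemma cone_sub_of_translate {d : ℕ} {K₁ K₂ : Set (EuclideanSpace ℝ (Fin d))}
    {v : EuclideanSpace ℝ (Fin d)}
    (h1closed : IsClosed K₁)
    (h1cone : ∀ x ∈ K₁, ∀ t : ℝ, 0 < t → t • x ∈ K₁)
    (h2cone : ∀ x ∈ K₂, ∀ t : ℝ, 0 < t → t • x ∈ K₂)
    (hsub : K₂ ⊆ (fun x => x + v) '' K₁) : K₂ ⊆ K₁ := by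
  intro x hx
  have key : ∀ n : ℕ, x - (1 / ((n : ℝ) + 1)) • v ∈ K₁ := by
    intro n
    have hn : (0 : ℝ) < (n : ℝ) + 1 := by positivity
    obtain ⟨y, hy, hyx⟩ := hsub (h2cone x hx ((n : ℝ) + 1) hn)
    have hmem := h1cone y hy (1 / ((n : ℝ) + 1)) (by positivity)
    have hy' : y = ((n : ℝ) + 1) • x - v := by
      have : y + v = ((n : ℝ) + 1) • x := hyx
      rw [← this]; abel
    have heq : (1 / ((n : ℝ) + 1)) • y = x - (1 / ((n : ℝ) + 1)) • v := by
      rw [hy', smul_sub, smul_smul]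
      rw [one_div_mul_cancel (ne_of_gt hn), one_smul]
    rwa [heq] at hmem
  have htend : Filter.Tendsto (fun n : ℕ => x - (1 / ((n : ℝ) + 1)) • v)
      Filter.atTop (nhds x) := by
    have h0 : Filter.Tendsto (fun n : ℕ => (1 / ((n : ℝ) + 1)) • v)
        Filter.atTop (nhds ((0 : ℝ) • v)) :=
      (tendsto_one_div_add_atTop_nhds_zero_nat).smul_const v
    rw [zero_smul] at h0
    have := Filter.Tendsto.sub (tendsto_const_nhds (x := x)) h0
    simpa using this
  exact h1closed.mem_of_tendsto htend (Filter.Eventually.of_forall key)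

theorem stmt11 (d : ℕ) (hd : 0 < d) (C K₁ K₂ : Set (EuclideanSpace ℝ (Fin d)))
    (hK₁closed : IsClosed K₁) (hK₁conv : Convex ℝ K₁)
    (hK₁cone : ∀ x ∈ K₁, ∀ t : ℝ, 0 < t → t • x ∈ K₁)
    (hK₂closed : IsClosed K₂) (hK₂conv : Convex ℝ K₂)
    (hK₂cone : ∀ x ∈ K₂, ∀ t : ℝ, 0 < t → t • x ∈ K₂)
    (h₁ : SimilarToCone C K₁) (h₂ : SimilarToCone C K₂) :
    K₁ = K₂ := by
  obtain ⟨a, b, hab1, hab2⟩ := h₁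
  obtain ⟨c, e, hce1, hce2⟩ := h₂
  have h21 : K₂ ⊆ (fun x => x + (b - c)) '' K₁ := by
    intro x hx
    obtain ⟨y, hy, hyx⟩ := hab2 (hce1 ⟨x, hx, rfl⟩)
    refine ⟨y, hy, ?_⟩
    simp only at hyx ⊢
    rw [← add_right_cancel_iff (a := c), ← hyx]
    abel
  have h12 : K₁ ⊆ (fun x => x + (e - a)) '' K₂ := by
    intro x hx
    obtain ⟨y, hy, hyx⟩ := hce2 (hab1 ⟨x, hx, rfl⟩)
    refine ⟨y, hy, ?_⟩
    simp only at hyx ⊢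
    rw [← add_right_cancel_iff (a := a), ← hyx]
    abel
  exact Set.Subset.antisymm
    (cone_sub_of_translate hK₂closed hK₂cone hK₁cone h12)
    (cone_sub_of_translate hK₁closed hK₁cone hK₂cone h21)
end

section
/- Let A ⊆ ℝ^d satisfy 0 ∈ A and A + a ⊆ A for every a ∈ A, let v ∈ ℝ^d, let F, G ⊆ ℝ^d, and let D₁, D₂ ≥ 0. Assume: (i) x ∈ A + D₁v; (ii) for every r′ ∈ [0, D₂), (A + r′v) ∩ G ≠ ∅; and (iii) for every r ∈ [0, D₁), (A + rv) ∩ F ≠ ∅. Then for every r ∈ [0, D₁ + D₂), (A + rv) ∩ (F ∪ (G + x)) ≠ ∅. -/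
theorem stmt12 (d : ℕ) (hd : 0 < d)
    (A F G : Set (EuclideanSpace ℝ (Fin d))) (v x : EuclideanSpace ℝ (Fin d))
    (h0A : (0 : EuclideanSpace ℝ (Fin d)) ∈ A)
    (hadd : ∀ a ∈ A, (fun y => y + a) '' A ⊆ A)
    (D₁ D₂ : ℝ) (hD₁ : 0 ≤ D₁) (hD₂ : 0 ≤ D₂)
    (hx : x ∈ (fun a => a + D₁ • v) '' A)
    (hG : ∀ r' ∈ Set.Ico (0 : ℝ) D₂, ((fun a => a + r' • v) '' A ∩ G).Nonempty)
    (hF : ∀ r ∈ Set.Ico (0 : ℝ) D₁, ((fun a => a + r • v) '' A ∩ F).Nonempty) :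
    ∀ r ∈ Set.Ico (0 : ℝ) (D₁ + D₂),
      ((fun a => a + r • v) '' A ∩ (F ∪ (fun g => g + x) '' G)).Nonempty := by
  rintro r ⟨hr0, hrD⟩
  by_cases hlt : r < D₁
  · obtain ⟨y, hy1, hy2⟩ := hF r ⟨hr0, hlt⟩
    exact ⟨y, hy1, Or.inl hy2⟩
  · push_neg at hlt
    obtain ⟨a₀, ha₀, hxeq⟩ := hx
    obtain ⟨y, ⟨a, ha, hay⟩, hyG⟩ := hG (r - D₁) ⟨by linarith, by linarith⟩
    refine ⟨y + x, ⟨a + a₀, hadd a₀ ha₀ ⟨a, ha, rfl⟩, ?_⟩, Or.inr ⟨y, hyG, rfl⟩⟩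
    simp only at hay hxeq ⊢
    rw [← hay, ← hxeq]
    have : r • v = (r - D₁) • v + D₁ • v := by rw [← add_smul]; ring_nf
    rw [this]; abel
end
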